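/- Let μ be a measure on (0,∞) with ∫ min{r,1} μ(dr) < ∞ and f(λ) = ∫_{(0,∞)} (1 − e^{−λ r}) μ(dr). If there exist c > 0 and δ > 0 such that f(r) ≤ c r^δ for all r ∈ [0,1], then ∫_{(1,∞)} r^{δ−ε} μ(dr) < ∞ for every ε > 0. -/

import Mathlib

open MeasureTheory Set Real
open scoped ENNReal

/-!
For `r > t` the integrand of `f(1/t)` is at least `1 - e⁻¹`, so Markov's inequality turns the
bound `f(1/t) ≤ c t^{-δ}` into the tail estimate `μ (t, ∞) ≤ c t^{-δ} / (1 - e⁻¹)` for `t ≥ 1`.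
By the layer-cake formula, `∫_{(1,∞)} r^q dμ = q ∫_0^∞ t^{q-1} μ((1,∞) ∩ (t,∞)) dt`, which the
tail estimate makes finite for `0 < q < δ`; for `q ≤ 0` finiteness of `μ (1, ∞)` suffices.
-/

lemma one_sub_exp_neg_nonneg {x : ℝ} (hx : 0 ≤ x) : 0 ≤ 1 - exp (-x) :=
  sub_nonneg.2 (exp_le_one_iff.2 (neg_nonpos.2 hx))

lemma one_sub_exp_neg_mul_le_min {l r : ℝ} (hl1 : l ≤ 1) (hr : 0 ≤ r) :
    1 - exp (-(l * r)) ≤ min r 1 :=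
  le_min (by nlinarith [add_one_le_exp (-(l * r))]) (by linarith [exp_pos (-(l * r))])

lemma ae_pos_of_measure_Iic_eq_zero {μ : Measure ℝ} (hμ : μ (Iic 0) = 0) : ∀ᵐ r ∂μ, 0 < r :=
  ae_iff.2 (by simp only [not_lt]; exact hμ)

lemma integrable_one_sub_exp_neg_mul {μ : Measure ℝ} (hμsupp : μ (Iic 0) = 0)
    (hμint : ∫⁻ r, ENNReal.ofReal (min r 1) ∂μ < ∞) {l : ℝ} (hl0 : 0 ≤ l) (hl1 : l ≤ 1) :
    Integrable (fun r ↦ 1 - exp (-(l * r))) μ := by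
  refine ⟨by fun_prop, (lintegral_mono_ae ?_).trans_lt hμint⟩
  filter_upwards [ae_pos_of_measure_Iic_eq_zero hμsupp] with r hr
  rw [Real.enorm_eq_ofReal (one_sub_exp_neg_nonneg (by positivity))]
  exact ENNReal.ofReal_le_ofReal (one_sub_exp_neg_mul_le_min hl1 hr.le)

lemma ofReal_one_sub_exp_neg_one_mul_measure_Ioi_le (μ : Measure ℝ) {t : ℝ} (ht : 0 < t) :
    ENNReal.ofReal (1 - exp (-1)) * μ (Ioi t) ≤
      ∫⁻ r, ENNReal.ofReal (1 - exp (-(t⁻¹ * r))) ∂μ :=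
  calc ENNReal.ofReal (1 - exp (-1)) * μ (Ioi t)
      = ∫⁻ _ in Ioi t, ENNReal.ofReal (1 - exp (-1)) ∂μ := (setLIntegral_const _ _).symm
    _ ≤ ∫⁻ r in Ioi t, ENNReal.ofReal (1 - exp (-(t⁻¹ * r))) ∂μ := by
      refine setLIntegral_mono' measurableSet_Ioi fun r hr ↦ ENNReal.ofReal_le_ofReal ?_
      have h : 1 ≤ t⁻¹ * r := by
        rw [inv_mul_eq_div, one_le_div ht]
        exact hr.le
      gcongr
    _ ≤ ∫⁻ r, ENNReal.ofReal (1 - exp (-(t⁻¹ * r))) ∂μ := setLIntegral_le_lintegral _ _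

theorem measure_Ioi_le_of_integral_one_sub_exp_le {μ : Measure ℝ} (hμsupp : μ (Iic 0) = 0)
    (hμint : ∫⁻ r, ENNReal.ofReal (min r 1) ∂μ < ∞) {c δ : ℝ}
    (hf : ∀ l : ℝ, 0 ≤ l → l ≤ 1 → ∫ r, (1 - exp (-(l * r))) ∂μ ≤ c * l ^ δ)
    {t : ℝ} (ht : 1 ≤ t) :
    μ (Ioi t) ≤ ENNReal.ofReal (c / (1 - exp (-1))) * ENNReal.ofReal (t ^ (-δ)) := by
  have ht0 : 0 < t := zero_lt_one.trans_le ht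
  have hl0 : 0 ≤ t⁻¹ := inv_nonneg.2 ht0.le
  have hl1 : t⁻¹ ≤ 1 := inv_le_one_of_one_le₀ ht
  have he : 0 < 1 - exp (-1) := sub_pos.2 (exp_lt_one_iff.2 (by norm_num))
  have hnonneg : 0 ≤ᵐ[μ] fun r ↦ 1 - exp (-(t⁻¹ * r)) := by
    filter_upwards [ae_pos_of_measure_Iic_eq_zero hμsupp] with r hr
    exact one_sub_exp_neg_nonneg (by positivity)
  have hmarkov : ENNReal.ofReal (1 - exp (-1)) * μ (Ioi t) ≤ ENNReal.ofReal (c * t ^ (-δ)) := by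
    refine (ofReal_one_sub_exp_neg_one_mul_measure_Ioi_le μ ht0).trans ?_
    rw [← ofReal_integral_eq_lintegral_ofReal
      (integrable_one_sub_exp_neg_mul hμsupp hμint hl0 hl1) hnonneg,
      rpow_neg ht0.le, ← inv_rpow ht0.le]
    exact ENNReal.ofReal_le_ofReal (hf _ hl0 hl1)
  rw [← ENNReal.ofReal_mul' (rpow_nonneg ht0.le _), div_mul_eq_mul_div,
    ENNReal.ofReal_div_of_pos he, ENNReal.le_div_iff_mul_le (Or.inl (by positivity))
      (Or.inl ENNReal.ofReal_ne_top), mul_comm]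
  exact hmarkov

section MomentOfTail

variable {μ : Measure ℝ} {C : ℝ≥0∞} {δ q : ℝ}

lemma measure_Ioi_one_le_of_tail (htail : ∀ t, 1 ≤ t → μ (Ioi t) ≤ C * ENNReal.ofReal (t ^ (-δ))) :
    μ (Ioi 1) ≤ C := by
  simpa using htail 1 le_rfl

lemma setLIntegral_Ioi_one_rpow_lt_top_of_pos (hC : C ≠ ∞)
    (htail : ∀ t, 1 ≤ t → μ (Ioi t) ≤ C * ENNReal.ofReal (t ^ (-δ))) (hq0 : 0 < q)
    (hq : q < δ) : ∫⁻ r in Ioi 1, ENNReal.ofReal (r ^ q) ∂μ < ∞ := by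
  have hfin : μ (Ioi 1) < ∞ := (measure_Ioi_one_le_of_tail htail).trans_lt hC.lt_top
  set ν := μ.restrict (Ioi 1)
  have hν_le_one (t : ℝ) : ν {a | t < a} ≤ μ (Ioi 1) :=
    (measure_mono (subset_univ _)).trans (Measure.restrict_apply_univ _).le
  have hν_le_tail (t : ℝ) : ν {a | t < a} ≤ μ (Ioi t) := Measure.restrict_apply_le _ _
  have hν_nonneg : 0 ≤ᵐ[ν] fun r ↦ r :=
    (ae_restrict_iff' measurableSet_Ioi).2 (ae_of_all _ fun r (hr : 1 < r) ↦ by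
      simp only [Pi.zero_apply]; linarith)
  rw [lintegral_rpow_eq_lintegral_meas_lt_mul ν hν_nonneg aemeasurable_id' hq0]
  refine ENNReal.mul_lt_top ENNReal.ofReal_lt_top ?_
  rw [← Ioc_union_Ioi_eq_Ioi zero_le_one]
  refine (lintegral_union_le _ _ _).trans_lt (ENNReal.add_lt_top.2 ⟨?_, ?_⟩)
  · have hint : IntegrableOn (fun t : ℝ ↦ t ^ (q - 1)) (Ioc 0 1) :=
      (intervalIntegrable_iff_integrableOn_Ioc_of_le zero_le_one).1
        (intervalIntegral.intervalIntegrable_rpow' (by linarith))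
    calc ∫⁻ t in Ioc 0 1, ν {a | t < a} * ENNReal.ofReal (t ^ (q - 1))
        ≤ ∫⁻ t in Ioc 0 1, μ (Ioi 1) * ENNReal.ofReal (t ^ (q - 1)) :=
          setLIntegral_mono' measurableSet_Ioc fun t _ ↦ mul_le_mul_left (hν_le_one t) _
      _ = μ (Ioi 1) * ∫⁻ t in Ioc 0 1, ENNReal.ofReal (t ^ (q - 1)) :=
          lintegral_const_mul' _ _ hfin.ne
      _ < ∞ := ENNReal.mul_lt_top hfin hint.setLIntegral_lt_top
  · have hint : IntegrableOn (fun t : ℝ ↦ t ^ (-δ + (q - 1))) (Ioi 1) :=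
      integrableOn_Ioi_rpow_of_lt (by linarith) zero_lt_one
    calc ∫⁻ t in Ioi 1, ν {a | t < a} * ENNReal.ofReal (t ^ (q - 1))
        ≤ ∫⁻ t in Ioi 1, C * ENNReal.ofReal (t ^ (-δ + (q - 1))) := by
          refine setLIntegral_mono' measurableSet_Ioi fun t (ht : 1 < t) ↦ ?_
          have ht0 : 0 < t := zero_lt_one.trans ht
          rw [rpow_add ht0, ENNReal.ofReal_mul (rpow_nonneg ht0.le _), ← mul_assoc]
          gcongr
          exact (hν_le_tail t).trans (htail t ht.le)
      _ = C * ∫⁻ t in Ioi 1, ENNReal.ofReal (t ^ (-δ + (q - 1))) := lintegral_const_mul' _ _ hC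
      _ < ∞ := ENNReal.mul_lt_top hC.lt_top hint.setLIntegral_lt_top

theorem setLIntegral_Ioi_one_rpow_lt_top (hC : C ≠ ∞)
    (htail : ∀ t, 1 ≤ t → μ (Ioi t) ≤ C * ENNReal.ofReal (t ^ (-δ))) (hq : q < δ) :
    ∫⁻ r in Ioi 1, ENNReal.ofReal (r ^ q) ∂μ < ∞ := by
  rcases lt_or_ge 0 q with hq0 | hq0
  · exact setLIntegral_Ioi_one_rpow_lt_top_of_pos hC htail hq0 hq
  calc ∫⁻ r in Ioi 1, ENNReal.ofReal (r ^ q) ∂μ ≤ ∫⁻ _ in Ioi 1, 1 ∂μ :=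
        setLIntegral_mono' measurableSet_Ioi fun r (hr : 1 < r) ↦
          ENNReal.ofReal_le_one.2 (rpow_le_one_of_one_le_of_nonpos hr.le hq0)
    _ = μ (Ioi 1) := setLIntegral_one _
    _ < ∞ := (measure_Ioi_one_le_of_tail htail).trans_lt hC.lt_top

end MomentOfTail

theorem bernstein_moment_at_infinity_general
    (μ : Measure ℝ) (hμsupp : μ (Set.Iic 0) = 0)
    (hμint : (∫⁻ r, ENNReal.ofReal (min r 1) ∂μ) < ∞)
    (c δ : ℝ)
    (hf : ∀ l : ℝ, 0 ≤ l → l ≤ 1 → (∫ r, (1 - Real.exp (-(l * r))) ∂μ) ≤ c * l ^ δ)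
    (ε : ℝ) (hε : 0 < ε) :
    (∫⁻ r in Set.Ioi (1:ℝ), ENNReal.ofReal (r ^ (δ - ε)) ∂μ) < ∞ :=
  setLIntegral_Ioi_one_rpow_lt_top ENNReal.ofReal_ne_top
    (fun _ ht ↦ measure_Ioi_le_of_integral_one_sub_exp_le hμsupp hμint hf ht) (by linarith)

/-- **Lemma 5.1(ii)(b).** If the Bernstein function
`f(λ) = ∫ (1 - e^{-λr}) μ(dr)` satisfies `f(r) ≤ c r^δ` for `r ∈ [0,1]`, then
`∫_{(1,∞)} r^{δ-ε} μ(dr) < ∞` for every `ε > 0`. -/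
theorem bernstein_moment_at_infinity
    (μ : Measure ℝ) (hμsupp : μ (Set.Iic 0) = 0)
    (hμint : (∫⁻ r, ENNReal.ofReal (min r 1) ∂μ) < ∞)
    (c δ : ℝ) (hc : 0 < c) (hδ : 0 < δ)
    (hf : ∀ l : ℝ, 0 ≤ l → l ≤ 1 → (∫ r, (1 - Real.exp (-(l * r))) ∂μ) ≤ c * l ^ δ)
    (ε : ℝ) (hε : 0 < ε) :
    (∫⁻ r in Set.Ioi (1:ℝ), ENNReal.ofReal (r ^ (δ - ε)) ∂μ) < ∞ :=
  bernstein_moment_at_infinity_general μ hμsupp hμint c δ hf ε hε
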